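/- arXiv:1105.2609 — 3 statements merged into one kernel-verified Lean document; each statement's English description precedes it below -/
import Mathlib

section
/- Let f : ℝ → ℝ be a function that is given on all of ℝ by its Taylor series at the origin, i.e. f(t) = Σ_{n=0}^∞ (f⁽ⁿ⁾(0)/n!)·tⁿ for every t ∈ ℝ. Then for every t ∈ ℝ the series Σ_{n=0}^∞ (−1)ⁿ·(f⁽ⁿ⁾(t)/n!)·tⁿ converges absolutely, i.e. Σ_{n=0}^∞ |f⁽ⁿ⁾(t)|·|t|ⁿ/n! < ∞. -/
open Filter Topology

/-- The series `Σ aₙ` converges (in the sense of convergence of partial sums) to `s`. -/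
def SumsTo (a : ℕ → ℝ) (s : ℝ) : Prop :=
  Tendsto (fun N => ∑ n ∈ Finset.range N, a n) atTop (𝓝 s)

/-!
The terms of the Taylor series at `0` tend to zero at every point, so that series has infinite
radius and `f` is its sum: `f` is entire. An entire function has at every point `y` a power
series of infinite radius, whose `n`-th coefficient is `f⁽ⁿ⁾(y) / n!`; hence
`Σ ‖f⁽ⁿ⁾(y)‖ rⁿ / n!` converges for every `r`, in particular for `r = |y|`.
-/

open FormalMultilinearSeries
open scoped NNReal ENNReal

theorem SumsTo.tendsto_atTop_zero {a : ℕ → ℝ} {s : ℝ} (h : SumsTo a s) :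
    Tendsto a atTop (𝓝 0) := by
  have hsucc : Tendsto (fun N => ∑ n ∈ Finset.range (N + 1), a n) atTop (𝓝 s) :=
    h.comp (tendsto_add_atTop_nat 1)
  simpa only [Finset.sum_range_succ, add_sub_cancel_left, sub_self] using hsucc.sub h

theorem FormalMultilinearSeries.ofScalars_radius_eq_top_of_forall_tendsto
    {𝕜 : Type*} [NontriviallyNormedField 𝕜] (E : Type*) [NormedRing E] [NormedAlgebra 𝕜 E]
    [NormOneClass E] {c : ℕ → 𝕜} (hc : ∀ r : ℝ≥0, Tendsto (fun n => ‖c n‖ * r ^ n) atTop (𝓝 0)) :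
    (ofScalars E c).radius = ⊤ :=
  ENNReal.eq_top_of_forall_nnreal_le fun r =>
    (ofScalars E c).le_radius_of_tendsto (l := 0) <| by
      simpa only [ofScalars_norm] using hc r

theorem hasFPowerSeriesOnBall_ofScalars_of_forall_sumsTo {c : ℕ → ℝ} {f : ℝ → ℝ}
    (hf : ∀ t, SumsTo (fun n => c n * t ^ n) (f t)) :
    HasFPowerSeriesOnBall f (ofScalars ℝ c) 0 ⊤ := by
  set p := ofScalars ℝ c
  have hrad : p.radius = ⊤ := ofScalars_radius_eq_top_of_forall_tendsto ℝ fun r => by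
    simpa only [abs_mul, abs_pow, Real.norm_eq_abs, abs_zero, NNReal.abs_eq]
      using ((hf r).tendsto_atTop_zero).abs
  have hsum : f = p.sum := funext fun x =>
    tendsto_nhds_unique (hf x) <| by
      simpa only [p, ofScalars_apply_eq, smul_eq_mul] using
        (p.hasSum (x := x) (by simp [hrad])).tendsto_sum_nat
  simpa only [hsum, hrad] using p.hasFPowerSeriesOnBall (by simp [hrad])

section

variable {𝕜 : Type*} [NontriviallyNormedField 𝕜] {E : Type*} [NormedAddCommGroup E]
  [NormedSpace 𝕜 E] [CompleteSpace E] {f : 𝕜 → E}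

theorem HasFPowerSeriesOnBall.iteratedDeriv_eq_factorial_smul_coeff
    {p : FormalMultilinearSeries 𝕜 𝕜 E} {x : 𝕜} {r : ℝ≥0∞} (hf : HasFPowerSeriesOnBall f p x r)
    (n : ℕ) : iteratedDeriv n f x = n.factorial • p.coeff n := by
  rw [iteratedDeriv_eq_iteratedFDeriv, ← hf.factorial_smul 1 n]
  rfl

theorem HasFPowerSeriesOnBall.changeOrigin_of_radius_eq_top {p : FormalMultilinearSeries 𝕜 𝕜 E}
    {x : 𝕜} (hf : HasFPowerSeriesOnBall f p x ⊤) (y : 𝕜) :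
    HasFPowerSeriesOnBall f (p.changeOrigin (y - x)) y ⊤ := by
  simpa only [add_sub_cancel, ENNReal.top_sub_coe] using
    hf.changeOrigin (y := y - x) ENNReal.coe_lt_top

theorem HasFPowerSeriesOnBall.summable_norm_iteratedDeriv_mul_pow_div_factorial
    {p : FormalMultilinearSeries 𝕜 𝕜 E} {x : 𝕜} (hf : HasFPowerSeriesOnBall f p x ⊤)
    (y : 𝕜) (r : ℝ≥0) :
    Summable fun n => ‖iteratedDeriv n f y‖ * r ^ n / n.factorial := by
  set q := p.changeOrigin (y - x)
  have hq := hf.changeOrigin_of_radius_eq_top y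
  refine Summable.of_nonneg_of_le (fun n => by positivity) (fun n => ?_)
    (q.summable_norm_mul_pow (r := r) (hq.r_le.trans_lt' ENNReal.coe_lt_top))
  have hfac : (0 : ℝ) < n.factorial := by positivity
  rw [div_le_iff₀ hfac, q.norm_apply_eq_norm_coef, mul_right_comm,
    hq.iteratedDeriv_eq_factorial_smul_coeff, mul_comm _ (n.factorial : ℝ)]
  gcongr
  exact norm_nsmul_le

end

/-- If `f : ℝ → ℝ` is given on all of `ℝ` by its Taylor series at the origin, then for
every `t` the series `Σ (−1)ⁿ (f⁽ⁿ⁾(t)/n!) tⁿ` converges absolutely, i.e.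
`Σ |f⁽ⁿ⁾(t)| |t|ⁿ / n! < ∞`. -/
theorem stmt_1 (f : ℝ → ℝ)
    (hTaylor : ∀ t : ℝ,
      SumsTo (fun n => (iteratedDeriv n f 0 / (n.factorial : ℝ)) * t ^ n) (f t)) :
    ∀ t : ℝ,
      Summable (fun n => |iteratedDeriv n f t| * |t| ^ n / (n.factorial : ℝ)) := fun t =>
  (hasFPowerSeriesOnBall_ofScalars_of_forall_sumsTo hTaylor)
    |>.summable_norm_iteratedDeriv_mul_pow_div_factorial t ‖t‖₊
end

section
/- Let f : ℝ → ℝ be a function that is given on all of ℝ by its Taylor series at the origin, i.e. f(t) = Σ_{n=0}^∞ (f⁽ⁿ⁾(0)/n!)·tⁿ for every t ∈ ℝ. Then for every R > 0 the partial sums t ↦ Σ_{n=0}^{N} (−1)ⁿ·(f⁽ⁿ⁾(t)/n!)·tⁿ converge uniformly on the interval [−R, R] to the constant function f(0) as N → ∞. -/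
open Filter Topology
open scoped NNReal ENNReal

open FormalMultilinearSeries in
/-- If `f : ℝ → ℝ` is given on all of `ℝ` by its Taylor series at the origin, then for
every `R > 0` the partial sums `t ↦ Σ_{n=0}^{N} (−1)ⁿ (f⁽ⁿ⁾(t)/n!) tⁿ` converge uniformly
on `[−R, R]` to the constant function `f 0` as `N → ∞`. -/
theorem stmt_2 (f : ℝ → ℝ)
    (hTaylor : ∀ t : ℝ,
      SumsTo (fun n => (iteratedDeriv n f 0 / (n.factorial : ℝ)) * t ^ n) (f t)) :
    ∀ R : ℝ, 0 < R →
      TendstoUniformlyOn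
        (fun (N : ℕ) (t : ℝ) =>
          ∑ n ∈ Finset.range (N + 1),
            (-1 : ℝ) ^ n * (iteratedDeriv n f t / (n.factorial : ℝ)) * t ^ n)
        (fun _ => f 0) atTop (Set.Icc (-R) R) := by
  set a : ℕ → ℝ := fun n => iteratedDeriv n f 0 / (n.factorial : ℝ) with ha
  set p : FormalMultilinearSeries ℝ ℝ ℝ := ofScalars ℝ a with hp
  -- the radius of convergence is infinite
  have hrad : p.radius = ⊤ := by
    refine ENNReal.eq_top_of_forall_nnreal_le fun r => ?_
    apply p.le_radius_of_tendsto (l := 0)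
    have hs := hTaylor r
    have h2 : Tendsto (fun n : ℕ => a n * (r : ℝ) ^ n) atTop (𝓝 0) := by
      have := (hs.comp (tendsto_add_atTop_nat 1)).sub hs
      simp only [Function.comp, Finset.sum_range_succ, sub_self, add_sub_cancel_left] at this
      exact this
    have h3 : Tendsto (fun n : ℕ => |a n * (r : ℝ) ^ n|) atTop (𝓝 0) := by
      simpa using h2.abs
    refine h3.congr fun n => ?_
    rw [hp, ofScalars_norm, Real.norm_eq_abs, abs_mul, abs_pow,
      abs_of_nonneg r.coe_nonneg]
  -- `f` equals the sum of the power series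
  have hball : HasFPowerSeriesOnBall p.sum p 0 ⊤ := by
    have := p.hasFPowerSeriesOnBall (by rw [hrad]; exact ENNReal.zero_lt_top)
    rwa [hrad] at this
  have hf : f = p.sum := by
    funext t
    have hsum := hball.hasSum (y := t) (by simp)
    have h3 : Tendsto (fun N => ∑ n ∈ Finset.range N, p n (fun _ => t)) atTop
        (𝓝 (p.sum (0 + t))) := hsum.tendsto_sum_nat
    have h4 := hTaylor t
    simp only [hp, ofScalars_apply_eq, smul_eq_mul, zero_add] at h3
    exact tendsto_nhds_unique h4 h3
  have hfball : HasFPowerSeriesOnBall f p 0 ⊤ := hf ▸ hball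
  -- power series of `f` at an arbitrary point `t`
  have hq : ∀ t : ℝ, HasFPowerSeriesOnBall f (p.changeOrigin t) t ⊤ := by
    intro t
    have := hfball.changeOrigin (y := t) (by simp)
    simpa using this
  intro R hR
  set R' : ℝ≥0 := ⟨R, hR.le⟩ with hR'
  set F : ℕ → ℝ → ℝ := fun n t => (p.changeOrigin t) n (fun _ => -t) with hF
  -- the uniform bound
  set u : ℕ → ℝ := fun n =>
    (((∑' s : Σ l : ℕ, { s : Finset (Fin (n + l)) // s.card = l },
      ‖p (n + s.1)‖₊ * R' ^ s.1) * R' ^ n : ℝ≥0) : ℝ) with hu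
  have husum : Summable u := by
    rw [hu, NNReal.summable_coe]
    have hr : (↑R' + ↑R' : ℝ≥0∞) < p.radius := by
      rw [hrad, ← ENNReal.coe_add]; exact ENNReal.coe_lt_top
    simpa only [← NNReal.tsum_mul_right] using
      (NNReal.summable_sigma.1 (p.changeOriginSeries_summable_aux₁ hr)).2
  have hbound : ∀ n t, t ∈ Set.Icc (-R) R → ‖F n t‖ ≤ u n := by
    intro n t ht
    have htR : ‖t‖₊ ≤ R' := by
      rw [← NNReal.coe_le_coe, coe_nnnorm, Real.norm_eq_abs]
      exact abs_le.mpr ⟨ht.1, ht.2⟩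
    rw [← coe_nnnorm, hu, NNReal.coe_le_coe]
    calc ‖F n t‖₊ ≤ ‖(p.changeOrigin t) n‖₊ * ∏ _i : Fin n, ‖-t‖₊ :=
          ContinuousMultilinearMap.le_opNNNorm _ _
      _ = ‖(p.changeOrigin t) n‖₊ * ‖t‖₊ ^ n := by
          simp [Finset.prod_const]
      _ ≤ (∑' s : Σ l : ℕ, { s : Finset (Fin (n + l)) // s.card = l },
            ‖p (n + s.1)‖₊ * R' ^ s.1) * R' ^ n := by
          refine mul_le_mul' ?_ (pow_le_pow_left' htR n)
          refine (p.nnnorm_changeOrigin_le n (by rw [hrad]; exact ENNReal.coe_lt_top)).trans ?_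
          refine Summable.tsum_le_tsum (fun s => ?_) ?_ ?_
          · exact mul_le_mul' le_rfl (pow_le_pow_left' htR s.1)
          · exact p.changeOriginSeries_summable_aux₂ (by rw [hrad]; exact ENNReal.coe_lt_top) n
          · exact p.changeOriginSeries_summable_aux₂ (by rw [hrad]; exact ENNReal.coe_lt_top) n
  -- each partial-sum family member is given by `F`
  have hcoeff : ∀ n t, F n t =
      (-1 : ℝ) ^ n * (iteratedDeriv n f t / (n.factorial : ℝ)) * t ^ n := by
    intro n t
    have h1 := (hq t).factorial_smul (-t) n
    have h2 : iteratedFDeriv ℝ n f t (fun _ => -t) = (-t) ^ n * iteratedDeriv n f t := by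
      have := (iteratedFDeriv ℝ n f t).map_smul_univ (fun _ : Fin n => (-t : ℝ))
        (fun _ => (1 : ℝ))
      simp only [smul_eq_mul, mul_one, Finset.prod_const, Finset.card_univ,
        Fintype.card_fin] at this
      rw [this, iteratedDeriv_eq_iteratedFDeriv]
    rw [h2] at h1
    have h3 : (F n t) = ((-t) ^ n * iteratedDeriv n f t) / (n.factorial : ℝ) := by
      rw [← h1, nsmul_eq_mul, hF]
      field_simp
    rw [h3, neg_pow]
    ring
  -- the sums `∑' n, F n t` equal `f 0`
  have htsum : ∀ t : ℝ, HasSum (fun n => F n t) (f 0) := by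
    intro t
    have := (hq t).hasSum (y := -t) (by simp)
    simpa only [add_neg_cancel] using this
  -- conclude via uniform convergence of series with summable bound
  have H := tendstoUniformlyOn_tsum (f := F) husum hbound
  have hlim : (fun t => ∑' n, F n t) = fun _ : ℝ => f 0 := by
    funext t; exact (htsum t).tsum_eq
  rw [hlim] at H
  have H' : TendstoUniformlyOn (fun N t => ∑ n ∈ Finset.range (N + 1), F n t)
      (fun _ => f 0) atTop (Set.Icc (-R) R) := fun v hv =>
    (tendsto_finset_range.comp (tendsto_add_atTop_nat 1)).eventually (H v hv)
  refine H'.congr ?_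
  filter_upwards with N t _ht
  exact Finset.sum_congr rfl fun n _ => hcoeff n t
end

section
/- Let ω ∈ ℝ with ω ≠ 0, and let (qₙ)_{n≥0}, (pₙ)_{n≥0} be sequences of smooth functions ℝ → ℝ satisfying, for all n ≥ 0 and all t ∈ ℝ, the recursion (n+1)·q_{n+1}(t) + qₙ′(t) = pₙ(t) and (n+1)·p_{n+1}(t) + pₙ′(t) = −ω²·qₙ(t). Let t ∈ ℝ be such that the series q̂₀(t) = Σ_{n=0}^∞ (−1)ⁿ·(q₀⁽ⁿ⁾(t)/n!)·tⁿ and p̂₀(t) = Σ_{n=0}^∞ (−1)ⁿ·(p₀⁽ⁿ⁾(t)/n!)·tⁿ both converge absolutely. Then the series Σ_{n=0}^∞ qₙ(t)·tⁿ converges and its sum equals q̂₀(t)·cos(ωt) + ω⁻¹·p̂₀(t)·sin(ωt). -/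
open Filter Topology

noncomputable def aTerm (f : ℝ → ℝ) (t : ℝ) (k : ℕ) : ℝ :=
  (-1 : ℝ) ^ k * (iteratedDeriv k f t / (k.factorial : ℝ)) * t ^ k

noncomputable def ac (ω : ℝ) (q p : ℕ → ℝ → ℝ) (t : ℝ) (k : ℕ) : ℂ :=
  ((aTerm (p 0) t k : ℝ) : ℂ) + (ω : ℂ) * Complex.I * ((aTerm (q 0) t k : ℝ) : ℂ)

noncomputable def bc (ω t : ℝ) (m : ℕ) : ℂ :=
  (Complex.I * ω * t) ^ m / (m.factorial : ℂ)


private lemma key_formula (ω : ℝ) (q p : ℕ → ℝ → ℝ)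
    (hq : ∀ n, ContDiff ℝ (⊤ : ℕ∞) (q n)) (hp : ∀ n, ContDiff ℝ (⊤ : ℕ∞) (p n))
    (hrec1 : ∀ (n : ℕ) (t : ℝ), ((n : ℝ) + 1) * q (n + 1) t + deriv (q n) t = p n t)
    (hrec2 : ∀ (n : ℕ) (t : ℝ), ((n : ℝ) + 1) * p (n + 1) t + deriv (p n) t = -ω ^ 2 * q n t) :
    ∀ (n : ℕ) (s : ℝ),
      (n.factorial : ℂ) * ((p n s : ℂ) + (ω : ℂ) * Complex.I * (q n s : ℂ)) =
      ∑ k ∈ Finset.range (n+1), (n.choose k : ℂ) * (Complex.I * ω)^(n-k) * (-1)^k *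
        (((iteratedDeriv k (p 0) s : ℝ) : ℂ) + (ω : ℂ) * Complex.I * ((iteratedDeriv k (q 0) s : ℝ) : ℂ)) := by
  have hZd : ∀ (k : ℕ) (s : ℝ), HasDerivAt
      (fun u => ((iteratedDeriv k (p 0) u : ℝ) : ℂ) + (ω : ℂ) * Complex.I * ((iteratedDeriv k (q 0) u : ℝ) : ℂ))
      (((iteratedDeriv (k+1) (p 0) s : ℝ) : ℂ) + (ω : ℂ) * Complex.I * ((iteratedDeriv (k+1) (q 0) s : ℝ) : ℂ)) s := by
    intro k s
    have hpk : HasDerivAt (iteratedDeriv k (p 0)) (iteratedDeriv (k+1) (p 0) s) s := by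
      rw [iteratedDeriv_succ]
      exact (((hp 0).differentiable_iteratedDeriv k (by exact_mod_cast ENat.coe_lt_top k)) s).hasDerivAt
    have hqk : HasDerivAt (iteratedDeriv k (q 0)) (iteratedDeriv (k+1) (q 0) s) s := by
      rw [iteratedDeriv_succ]
      exact (((hq 0).differentiable_iteratedDeriv k (by exact_mod_cast ENat.coe_lt_top k)) s).hasDerivAt
    exact hpk.ofReal_comp.add (hqk.ofReal_comp.const_mul _)
  have hWd : ∀ (n : ℕ) (s : ℝ), HasDerivAt
      (fun u => (p n u : ℂ) + (ω : ℂ) * Complex.I * (q n u : ℂ))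
      (((deriv (p n) s : ℝ) : ℂ) + (ω : ℂ) * Complex.I * ((deriv (q n) s : ℝ) : ℂ)) s := fun n s =>
    ((((hp n).differentiable (by simp)) s).hasDerivAt.ofReal_comp).add
      (((((hq n).differentiable (by simp)) s).hasDerivAt.ofReal_comp).const_mul _)
  have hWrec : ∀ (n : ℕ) (s : ℝ),
      ((n : ℂ) + 1) * ((p (n+1) s : ℂ) + (ω : ℂ) * Complex.I * (q (n+1) s : ℂ)) =
      Complex.I * ω * ((p n s : ℂ) + (ω : ℂ) * Complex.I * (q n s : ℂ))
        - (((deriv (p n) s : ℝ) : ℂ) + (ω : ℂ) * Complex.I * ((deriv (q n) s : ℝ) : ℂ)) := by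
    intro n s
    have e1 : ((n : ℝ) + 1) * q (n+1) s = p n s - deriv (q n) s := by linarith [hrec1 n s]
    have e2 : ((n : ℝ) + 1) * p (n+1) s = -ω^2 * q n s - deriv (p n) s := by linarith [hrec2 n s]
    have e1c : ((n : ℂ) + 1) * (q (n+1) s : ℂ) = (p n s : ℂ) - ((deriv (q n) s : ℝ) : ℂ) := by
      exact_mod_cast congrArg (Complex.ofReal) e1
    have e2c : ((n : ℂ) + 1) * (p (n+1) s : ℂ) = -(ω:ℂ)^2 * (q n s : ℂ) - ((deriv (p n) s : ℝ) : ℂ) := by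
      exact_mod_cast congrArg (Complex.ofReal) e2
    linear_combination e2c + (ω : ℂ) * Complex.I * e1c - (ω:ℂ)^2 * (q n s : ℂ) * Complex.I_sq
  intro n
  induction n with
  | zero => intro s; simp
  | succ n ih =>
    intro s
    have hder : ∀ u : ℝ, (n.factorial : ℂ) * (((deriv (p n) u : ℝ) : ℂ) + (ω : ℂ) * Complex.I * ((deriv (q n) u : ℝ) : ℂ)) =
        ∑ k ∈ Finset.range (n+1), (n.choose k : ℂ) * (Complex.I * ω)^(n-k) * (-1)^k *
          (((iteratedDeriv (k+1) (p 0) u : ℝ) : ℂ) + (ω : ℂ) * Complex.I * ((iteratedDeriv (k+1) (q 0) u : ℝ) : ℂ)) := by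
      intro u
      have h1 : HasDerivAt (fun v => (n.factorial : ℂ) * ((p n v : ℂ) + (ω : ℂ) * Complex.I * (q n v : ℂ)))
          ((n.factorial : ℂ) * (((deriv (p n) u : ℝ) : ℂ) + (ω : ℂ) * Complex.I * ((deriv (q n) u : ℝ) : ℂ))) u :=
        (hWd n u).const_mul _
      have h2 : HasDerivAt (fun v => ∑ k ∈ Finset.range (n+1), (n.choose k : ℂ) * (Complex.I * ω)^(n-k) * (-1)^k *
            (((iteratedDeriv k (p 0) v : ℝ) : ℂ) + (ω : ℂ) * Complex.I * ((iteratedDeriv k (q 0) v : ℝ) : ℂ)))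
          (∑ k ∈ Finset.range (n+1), (n.choose k : ℂ) * (Complex.I * ω)^(n-k) * (-1)^k *
            (((iteratedDeriv (k+1) (p 0) u : ℝ) : ℂ) + (ω : ℂ) * Complex.I * ((iteratedDeriv (k+1) (q 0) u : ℝ) : ℂ))) u :=
        HasDerivAt.fun_sum fun k _ => (hZd k u).const_mul _
      have e : (fun v => (n.factorial : ℂ) * ((p n v : ℂ) + (ω : ℂ) * Complex.I * (q n v : ℂ)))
          = fun v => ∑ k ∈ Finset.range (n+1), (n.choose k : ℂ) * (Complex.I * ω)^(n-k) * (-1)^k *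
            (((iteratedDeriv k (p 0) v : ℝ) : ℂ) + (ω : ℂ) * Complex.I * ((iteratedDeriv k (q 0) v : ℝ) : ℂ)) :=
        funext ih
      exact (e ▸ h1).unique h2
    have step : ((n+1).factorial : ℂ) * ((p (n+1) s : ℂ) + (ω : ℂ) * Complex.I * (q (n+1) s : ℂ)) =
        Complex.I * ω * ((n.factorial : ℂ) * ((p n s : ℂ) + (ω : ℂ) * Complex.I * (q n s : ℂ)))
        - (n.factorial : ℂ) * (((deriv (p n) s : ℝ) : ℂ) + (ω : ℂ) * Complex.I * ((deriv (q n) s : ℝ) : ℂ)) := by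
      rw [Nat.factorial_succ]
      push_cast
      linear_combination (n.factorial : ℂ) * hWrec n s
    rw [step, ih s, hder s]
    have ext1 : (∑ k ∈ Finset.range (n+2), Complex.I * ω *
          ((n.choose k : ℂ) * (Complex.I * ω)^(n-k) * (-1)^k * (((iteratedDeriv (k) (p 0) s : ℝ) : ℂ) + (ω : ℂ) * Complex.I * ((iteratedDeriv (k) (q 0) s : ℝ) : ℂ))))
        = Complex.I * ω * (∑ k ∈ Finset.range (n+1),
          (n.choose k : ℂ) * (Complex.I * ω)^(n-k) * (-1)^k * (((iteratedDeriv (k) (p 0) s : ℝ) : ℂ) + (ω : ℂ) * Complex.I * ((iteratedDeriv (k) (q 0) s : ℝ) : ℂ))) := by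
      rw [Finset.sum_range_succ, Finset.mul_sum]
      simp
    rw [← ext1]
    rw [Finset.sum_range_succ' (fun k => Complex.I * ω *
          ((n.choose k : ℂ) * (Complex.I * ω)^(n-k) * (-1)^k * (((iteratedDeriv (k) (p 0) s : ℝ) : ℂ) + (ω : ℂ) * Complex.I * ((iteratedDeriv (k) (q 0) s : ℝ) : ℂ)))) (n+1)]
    rw [Finset.sum_range_succ' (fun k => ((n+1).choose k : ℂ) * (Complex.I * ω)^(n+1-k) * (-1)^k * (((iteratedDeriv (k) (p 0) s : ℝ) : ℂ) + (ω : ℂ) * Complex.I * ((iteratedDeriv (k) (q 0) s : ℝ) : ℂ))) (n+1)]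
    have hterm : ∀ k ∈ Finset.range (n+1),
        (Complex.I * ω * ((n.choose (k+1) : ℂ) * (Complex.I * ω)^(n-(k+1)) * (-1)^(k+1) * (((iteratedDeriv (k+1) (p 0) s : ℝ) : ℂ) + (ω : ℂ) * Complex.I * ((iteratedDeriv (k+1) (q 0) s : ℝ) : ℂ)))
          - (n.choose k : ℂ) * (Complex.I * ω)^(n-k) * (-1)^k * (((iteratedDeriv (k+1) (p 0) s : ℝ) : ℂ) + (ω : ℂ) * Complex.I * ((iteratedDeriv (k+1) (q 0) s : ℝ) : ℂ)))
        = ((n+1).choose (k+1) : ℂ) * (Complex.I * ω)^(n+1-(k+1)) * (-1)^(k+1) * (((iteratedDeriv (k+1) (p 0) s : ℝ) : ℂ) + (ω : ℂ) * Complex.I * ((iteratedDeriv (k+1) (q 0) s : ℝ) : ℂ)) := by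
      intro k hk
      have hk' : k ≤ n := Nat.lt_succ_iff.mp (Finset.mem_range.mp hk)
      have h1 : n + 1 - (k+1) = n - k := by omega
      rw [h1, Nat.choose_succ_succ']
      push_cast
      rcases eq_or_lt_of_le hk' with rfl | hlt
      · simp
        rw [pow_succ]
        ring
      · have h2 : n - k = (n - (k+1)) + 1 := by omega
        rw [h2, pow_succ]
        ring
    have h := Finset.sum_congr rfl hterm
    rw [Finset.sum_sub_distrib] at h
    have hlast : Complex.I * ω * ((n.choose 0 : ℂ) * (Complex.I * ω)^(n-0) * (-1)^0 * (((iteratedDeriv (0) (p 0) s : ℝ) : ℂ) + (ω : ℂ) * Complex.I * ((iteratedDeriv (0) (q 0) s : ℝ) : ℂ)))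
        = ((n+1).choose 0 : ℂ) * (Complex.I * ω)^(n+1-0) * (-1)^0 * (((iteratedDeriv (0) (p 0) s : ℝ) : ℂ) + (ω : ℂ) * Complex.I * ((iteratedDeriv (0) (q 0) s : ℝ) : ℂ)) := by
      simp only [Nat.choose_zero_right, Nat.sub_zero, Nat.cast_one, pow_zero, one_mul, mul_one]
      rw [pow_succ]
      ring
    linear_combination h + hlast

private lemma cauchy_term (ω : ℝ) (q p : ℕ → ℝ → ℝ)
    (hq : ∀ n, ContDiff ℝ (⊤ : ℕ∞) (q n)) (hp : ∀ n, ContDiff ℝ (⊤ : ℕ∞) (p n))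
    (hrec1 : ∀ (n : ℕ) (t : ℝ), ((n : ℝ) + 1) * q (n + 1) t + deriv (q n) t = p n t)
    (hrec2 : ∀ (n : ℕ) (t : ℝ), ((n : ℝ) + 1) * p (n + 1) t + deriv (p n) t = -ω ^ 2 * q n t)
    (t : ℝ) (n : ℕ) :
    ∑ k ∈ Finset.range (n+1), ac ω q p t k * bc ω t (n-k)
      = (((p n t : ℝ) : ℂ) + (ω : ℂ) * Complex.I * ((q n t : ℝ) : ℂ)) * (t : ℂ)^n := by
  have hfac : (n.factorial : ℂ) ≠ 0 := Nat.cast_ne_zero.2 n.factorial_ne_zero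
  have key := key_formula ω q p hq hp hrec1 hrec2 n t
  have termwise : ∀ k ∈ Finset.range (n+1), ac ω q p t k * bc ω t (n-k)
      = (n.factorial : ℂ)⁻¹ * ((n.choose k : ℂ) * (Complex.I * ω)^(n-k) * (-1)^k *
          (((iteratedDeriv k (p 0) t : ℝ) : ℂ) + (ω : ℂ) * Complex.I * ((iteratedDeriv k (q 0) t : ℝ) : ℂ)) * (t : ℂ)^n) := by
    intro k hk
    have hk' : k ≤ n := Nat.lt_succ_iff.mp (Finset.mem_range.mp hk)
    have e1 : (t : ℂ)^n = (t : ℂ)^k * (t : ℂ)^(n-k) := by rw [← pow_add, Nat.add_sub_cancel' hk']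
    have hkf : (k.factorial : ℂ) ≠ 0 := Nat.cast_ne_zero.2 k.factorial_ne_zero
    have hnkf : ((n-k).factorial : ℂ) ≠ 0 := Nat.cast_ne_zero.2 (n-k).factorial_ne_zero
    rw [Nat.cast_choose ℂ hk', e1]
    unfold ac bc aTerm
    push_cast
    field_simp
    ring
  rw [Finset.sum_congr rfl termwise, ← Finset.mul_sum, ← Finset.sum_mul, ← key]
  field_simp

/-- For the harmonic-oscillator recursion, if `q̂₀(t)` and `p̂₀(t)` converge absolutely,
then `Σ qₙ(t)·tⁿ` converges to `q̂₀(t)·cos(ωt) + ω⁻¹·p̂₀(t)·sin(ωt)`. -/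
theorem stmt_11 (ω : ℝ) (hω : ω ≠ 0) (q p : ℕ → ℝ → ℝ)
    (hq : ∀ n, ContDiff ℝ (⊤ : ℕ∞) (q n)) (hp : ∀ n, ContDiff ℝ (⊤ : ℕ∞) (p n))
    (hrec1 : ∀ (n : ℕ) (t : ℝ), ((n : ℝ) + 1) * q (n + 1) t + deriv (q n) t = p n t)
    (hrec2 : ∀ (n : ℕ) (t : ℝ), ((n : ℝ) + 1) * p (n + 1) t + deriv (p n) t = -ω ^ 2 * q n t)
    (t : ℝ)
    (hqabs : Summable (fun n =>
      |(-1 : ℝ) ^ n * (iteratedDeriv n (q 0) t / (n.factorial : ℝ)) * t ^ n|))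
    (hpabs : Summable (fun n =>
      |(-1 : ℝ) ^ n * (iteratedDeriv n (p 0) t / (n.factorial : ℝ)) * t ^ n|)) :
    SumsTo (fun n => q n t * t ^ n)
      ((∑' n : ℕ, (-1 : ℝ) ^ n * (iteratedDeriv n (q 0) t / (n.factorial : ℝ)) * t ^ n) *
          Real.cos (ω * t) +
        ω⁻¹ *
          (∑' n : ℕ, (-1 : ℝ) ^ n * (iteratedDeriv n (p 0) t / (n.factorial : ℝ)) * t ^ n) *
          Real.sin (ω * t)) := by
  have hsq : Summable fun k => |aTerm (q 0) t k| := hqabs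
  have hsp : Summable fun k => |aTerm (p 0) t k| := hpabs
  have hsq' : Summable fun k => aTerm (q 0) t k := hsq.of_abs
  have hsp' : Summable fun k => aTerm (p 0) t k := hsp.of_abs
  have ha : Summable fun k => ‖ac ω q p t k‖ := by
    apply Summable.of_nonneg_of_le (fun k => norm_nonneg _) _ (hsp.add (hsq.mul_left |ω|))
    intro k
    calc ‖ac ω q p t k‖
        ≤ ‖((aTerm (p 0) t k : ℝ) : ℂ)‖ + ‖(ω : ℂ) * Complex.I * ((aTerm (q 0) t k : ℝ) : ℂ)‖ :=
          norm_add_le _ _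
      _ = |aTerm (p 0) t k| + |ω| * |aTerm (q 0) t k| := by
          simp [norm_mul, Complex.norm_real, Complex.norm_I, Real.norm_eq_abs]
  have hb : Summable fun m => ‖bc ω t m‖ := by
    refine (Real.summable_pow_div_factorial ‖Complex.I * (ω : ℂ) * (t : ℂ)‖).congr fun m => ?_
    unfold bc
    rw [norm_div, norm_pow, Complex.norm_natCast]
  have htend := (hasSum_sum_range_mul_of_summable_norm ha hb).tendsto_sum_nat
  have htend2 : Tendsto
      (fun N => ∑ n ∈ Finset.range N,
        (((p n t : ℝ) : ℂ) + (ω : ℂ) * Complex.I * ((q n t : ℝ) : ℂ)) * (t : ℂ)^n) atTop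
      (𝓝 ((∑' k, ac ω q p t k) * ∑' m, bc ω t m)) := by
    refine htend.congr fun N => ?_
    exact Finset.sum_congr rfl fun n _ => cauchy_term ω q p hq hp hrec1 hrec2 t n
  have hA : (∑' k, ac ω q p t k)
      = ((∑' k, aTerm (p 0) t k : ℝ) : ℂ) + (ω : ℂ) * Complex.I * ((∑' k, aTerm (q 0) t k : ℝ) : ℂ) := by
    unfold ac
    rw [Summable.tsum_add (Complex.summable_ofReal.2 hsp') ((Complex.summable_ofReal.2 hsq').mul_left _),
        tsum_mul_left, Complex.ofReal_tsum, Complex.ofReal_tsum]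
  have hB : (∑' m, bc ω t m)
      = ((Real.cos (ω * t) : ℝ) : ℂ) + ((Real.sin (ω * t) : ℝ) : ℂ) * Complex.I := by
    have h1 : (∑' m, bc ω t m) = NormedSpace.exp (((ω * t : ℝ) : ℂ) * Complex.I) := by
      rw [NormedSpace.exp_eq_tsum (𝕂 := ℂ)]
      refine tsum_congr fun m => ?_
      unfold bc
      rw [smul_eq_mul]
      push_cast
      ring
    rw [h1, ← Complex.exp_eq_exp_ℂ, Complex.exp_mul_I, ← Complex.ofReal_cos, ← Complex.ofReal_sin]
  have him := (Complex.continuous_im.tendsto _).comp htend2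
  have hfin := him.const_mul ω⁻¹
  have heq : ∀ N : ℕ, ω⁻¹ * ((∑ n ∈ Finset.range N,
      (((p n t : ℝ) : ℂ) + (ω : ℂ) * Complex.I * ((q n t : ℝ) : ℂ)) * (t : ℂ)^n).im)
      = ∑ n ∈ Finset.range N, q n t * t ^ n := by
    intro N
    rw [Complex.im_sum, Finset.mul_sum]
    refine Finset.sum_congr rfl fun n _ => ?_
    have h2 : ((((p n t : ℝ) : ℂ) + (ω : ℂ) * Complex.I * ((q n t : ℝ) : ℂ)) * (t : ℂ)^n).im
        = ω * (q n t * t ^ n) := by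
      rw [← Complex.ofReal_pow]
      simp only [Complex.add_im, Complex.add_re, Complex.mul_im, Complex.mul_re,
        Complex.ofReal_re, Complex.ofReal_im, Complex.I_re, Complex.I_im]
      ring
    rw [h2]
    field_simp
  have hval : ω⁻¹ * (((∑' k, ac ω q p t k) * ∑' m, bc ω t m).im)
      = (∑' k, aTerm (q 0) t k) * Real.cos (ω * t) + ω⁻¹ * (∑' k, aTerm (p 0) t k) * Real.sin (ω * t) := by
    rw [hA, hB]
    simp only [Complex.add_im, Complex.add_re, Complex.mul_im, Complex.mul_re,
      Complex.ofReal_re, Complex.ofReal_im, Complex.I_re, Complex.I_im]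
    field_simp
    ring
  show Tendsto (fun N => ∑ n ∈ Finset.range N, q n t * t ^ n) atTop
      (𝓝 ((∑' k, aTerm (q 0) t k) * Real.cos (ω * t) + ω⁻¹ * (∑' k, aTerm (p 0) t k) * Real.sin (ω * t)))
  rw [← hval]
  exact hfin.congr heq
end
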